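/- arXiv:math-ph/0409041 — 3 statements merged into one kernel-verified Lean document; each statement's English description precedes it below -/
import Mathlib

section
/- Let β₁ = ε₁ − ε₂, β₂ = ε₂ − ε₃, β₃ = K⁻ − δ + ε₃, β₄ = δ − ε₄ − K⁻, β₅ = δ + ε₄ − K⁻, β₆ = K⁺ − K⁻ + δ − ε₁ − ε₂ − ε₃. Then the Gram matrix (B(βᵢ, βⱼ))₁≤i,j≤6 equals the 6×6 matrix with rows (2, −1, 0, 0, 0, 0), (−1, 2, −1, 0, 0, 0), (0, −1, 0, 1, 1, 1), (0, 0, 1, 0, −2, −2), (0, 0, 1, −2, 0, −2), (0, 0, 1, −2, −2, 0). In particular β₃, β₄, β₅, β₆ are all isotropic. -/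
namespace HKMRank6

/-- Basis order: `(K⁺, K⁻, ε₁, ε₂, ε₃, ε₄, δ)`. The symmetric bilinear form with
`B(K⁺,K⁻) = B(K⁻,K⁺) = 1`, `B(εᵢ,εᵢ) = 1`, `B(δ,δ) = -1`, all other pairs zero. -/
def B (x y : Fin 7 → ℝ) : ℝ :=
  x 0 * y 1 + x 1 * y 0 + x 2 * y 2 + x 3 * y 3 + x 4 * y 4 + x 5 * y 5 - x 6 * y 6

def Kp : Fin 7 → ℝ := ![1, 0, 0, 0, 0, 0, 0]
def Km : Fin 7 → ℝ := ![0, 1, 0, 0, 0, 0, 0]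
def e1 : Fin 7 → ℝ := ![0, 0, 1, 0, 0, 0, 0]
def e2 : Fin 7 → ℝ := ![0, 0, 0, 1, 0, 0, 0]
def e3 : Fin 7 → ℝ := ![0, 0, 0, 0, 1, 0, 0]
def e4 : Fin 7 → ℝ := ![0, 0, 0, 0, 0, 1, 0]
def d  : Fin 7 → ℝ := ![0, 0, 0, 0, 0, 0, 1]

/-- The simple roots `β₁ = ε₁ - ε₂`, `β₂ = ε₂ - ε₃`, `β₃ = K⁻ - δ + ε₃`,
`β₄ = δ - ε₄ - K⁻`, `β₅ = δ + ε₄ - K⁻`, `β₆ = K⁺ - K⁻ + δ - ε₁ - ε₂ - ε₃`. -/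
def roots : Fin 6 → (Fin 7 → ℝ) :=
  ![e1 - e2, e2 - e3, Km - d + e3, d - e4 - Km, d + e4 - Km, Kp - Km + d - e1 - e2 - e3]

lemma vec7_5 (a b c d e f g : ℝ) : (![a,b,c,d,e,f,g]) 5 = f := rfl
lemma vec7_6 (a b c d e f g : ℝ) : (![a,b,c,d,e,f,g]) 6 = g := rfl

lemma vec6_apply (a b c d e f : ℝ) :
    (![a,b,c,d,e,f]) 0 = a ∧ (![a,b,c,d,e,f]) 1 = b ∧ (![a,b,c,d,e,f]) 2 = c ∧
    (![a,b,c,d,e,f]) 3 = d ∧ (![a,b,c,d,e,f]) 4 = e ∧ (![a,b,c,d,e,f]) 5 = f :=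
  ⟨rfl, rfl, rfl, rfl, rfl, rfl⟩

lemma B_explicit (a b c d e f g a' b' c' d' e' f' g' : ℝ) :
    B ![a,b,c,d,e,f,g] ![a',b',c',d',e',f',g'] =
      a * b' + b * a' + c * c' + d * d' + e * e' + f * f' - g * g' := rfl

lemma roots0 : roots 0 = ![0, 0, 1, -1, 0, 0, 0] := by
  show e1 - e2 = _
  funext i; fin_cases i <;> simp [e1, e2, vec7_5, vec7_6]
lemma roots1 : roots 1 = ![0, 0, 0, 1, -1, 0, 0] := by
  show e2 - e3 = _
  funext i; fin_cases i <;> simp [e2, e3, vec7_5, vec7_6]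
lemma roots2 : roots 2 = ![0, 1, 0, 0, 1, 0, -1] := by
  show Km - d + e3 = _
  funext i; fin_cases i <;> simp [Km, d, e3, vec7_5, vec7_6]
lemma roots3 : roots 3 = ![0, -1, 0, 0, 0, -1, 1] := by
  show d - e4 - Km = _
  funext i; fin_cases i <;> simp [Km, d, e4, vec7_5, vec7_6]
lemma roots4 : roots 4 = ![0, -1, 0, 0, 0, 1, 1] := by
  show d + e4 - Km = _
  funext i; fin_cases i <;> simp [Km, d, e4, vec7_5, vec7_6]
lemma roots5 : roots 5 = ![1, -1, -1, -1, -1, 0, 1] := by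
  show Kp - Km + d - e1 - e2 - e3 = _
  funext i; fin_cases i <;> simp [Kp, Km, d, e1, e2, e3, vec7_5, vec7_6]

theorem gram_matrix_rank6_second_system :
    (Matrix.of fun i j : Fin 6 => B (roots i) (roots j)) =
      !![ 2, -1,  0,  0,  0,  0;
         -1,  2, -1,  0,  0,  0;
          0, -1,  0,  1,  1,  1;
          0,  0,  1,  0, -2, -2;
          0,  0,  1, -2,  0, -2;
          0,  0,  1, -2, -2,  0] ∧
    B (roots 2) (roots 2) = 0 ∧ B (roots 3) (roots 3) = 0 ∧
    B (roots 4) (roots 4) = 0 ∧ B (roots 5) (roots 5) = 0 := by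
  have h2 := roots2; have h3 := roots3; have h4 := roots4; have h5 := roots5
  constructor
  · ext i j
    fin_cases i <;> fin_cases j <;>
      simp only [Matrix.of_apply, Fin.reduceFinMk, Fin.isValue, roots0, roots1,
        h2, h3, h4, h5, B_explicit] <;>
      (try norm_num) <;>
      rfl
  · refine ⟨?_, ?_, ?_, ?_⟩ <;>
      simp only [h2, h3, h4, h5, B_explicit] <;> norm_num

end HKMRank6
end

section
/- Let β₁ = K⁻ − δ + ε₁, β₂ = δ − ε₂ − K⁻, β₃ = ε₂ − ε₃, β₄ = ε₃ − ε₄, β₅ = ε₃ + ε₄, β₆ = K⁺ − ε₁ − ε₂. Then B(β₂,β₂) = 0, and the generalized Weyl reflection w_{β₂} maps this simple root system onto the system (ε₁ − ε₂, K⁻ − δ + ε₂, δ − ε₃ − K⁻, ε₃ − ε₄, ε₃ + ε₄, K⁺ − ε₁ − ε₂); explicitly, w_{β₂}(β₁) = ε₁ − ε₂, w_{β₂}(β₂) = K⁻ − δ + ε₂, w_{β₂}(β₃) = δ − ε₃ − K⁻, and w_{β₂} fixes β₄, β₅, β₆. -/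
open scoped Classical

namespace HKMRank6

/-- The generalized Weyl (odd) reflection associated with an isotropic vector `α`:
`w_α(α) = -α`; for `β ≠ α`, `w_α(β) = β + α` if `B α β ≠ 0` and `w_α(β) = β` otherwise. -/
noncomputable def w (α β : Fin 7 → ℝ) : Fin 7 → ℝ :=
  if β = α then -α else if B α β ≠ 0 then β + α else β


@[simp] lemma vec7_val0 (a b c d e f g : ℝ) : ![a,b,c,d,e,f,g] 0 = a := rfl
@[simp] lemma vec7_val1 (a b c d e f g : ℝ) : ![a,b,c,d,e,f,g] 1 = b := rfl
@[simp] lemma vec7_val2 (a b c d e f g : ℝ) : ![a,b,c,d,e,f,g] 2 = c := rfl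
@[simp] lemma vec7_val3 (a b c d e f g : ℝ) : ![a,b,c,d,e,f,g] 3 = d := rfl
@[simp] lemma vec7_val4 (a b c d e f g : ℝ) : ![a,b,c,d,e,f,g] 4 = e := rfl
@[simp] lemma vec7_val5 (a b c d e f g : ℝ) : ![a,b,c,d,e,f,g] 5 = f := rfl
@[simp] lemma vec7_val6 (a b c d e f g : ℝ) : ![a,b,c,d,e,f,g] 6 = g := rfl

private lemma hne1 : (Km - d + e1 : Fin 7 → ℝ) ≠ d - e2 - Km := by
  intro h; have := congrFun h 2; simp [Kp, Km, e1, e2, e3, e4, d] at this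
private lemma hB1 : B (d - e2 - Km) (Km - d + e1) ≠ 0 := by
  simp [B, Kp, Km, e1, e2, e3, e4, d]
private lemma hne3 : (e2 - e3 : Fin 7 → ℝ) ≠ d - e2 - Km := by
  intro h; have := congrFun h 6; simp [Kp, Km, e1, e2, e3, e4, d] at this
private lemma hB3 : B (d - e2 - Km) (e2 - e3) ≠ 0 := by
  simp [B, Kp, Km, e1, e2, e3, e4, d]
private lemma hne4 : (e3 - e4 : Fin 7 → ℝ) ≠ d - e2 - Km := by
  intro h; have := congrFun h 6; simp [Kp, Km, e1, e2, e3, e4, d] at this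
private lemma hB4 : ¬ B (d - e2 - Km) (e3 - e4) ≠ 0 := by
  simp [B, Kp, Km, e1, e2, e3, e4, d]
private lemma hne5 : (e3 + e4 : Fin 7 → ℝ) ≠ d - e2 - Km := by
  intro h; have := congrFun h 6; simp [Kp, Km, e1, e2, e3, e4, d] at this
private lemma hB5 : ¬ B (d - e2 - Km) (e3 + e4) ≠ 0 := by
  simp [B, Kp, Km, e1, e2, e3, e4, d]
private lemma beta6_eq : (Kp - e1 - e2 : Fin 7 → ℝ) = ![1, 0, -1, -1, 0, 0, 0] := by
  funext i; fin_cases i <;>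
    simp only [Pi.sub_apply, Kp, e1, e2, vec7_val0, vec7_val1, vec7_val2, vec7_val3,
      vec7_val4, vec7_val5, vec7_val6] <;> norm_num
private lemma hne6 : (Kp - e1 - e2 : Fin 7 → ℝ) ≠ d - e2 - Km := by
  intro h; have := congrFun h 0; rw [beta6_eq] at this
  simp [Kp, Km, e1, e2, e3, e4, d] at this
private lemma hB6 : ¬ B (d - e2 - Km) (Kp - e1 - e2) ≠ 0 := by
  rw [beta6_eq]; simp [B, Kp, Km, e1, e2, e3, e4, d]

theorem odd_reflection_second_system :
    B (d - e2 - Km) (d - e2 - Km) = 0 ∧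
    w (d - e2 - Km) (Km - d + e1) = e1 - e2 ∧
    w (d - e2 - Km) (d - e2 - Km) = Km - d + e2 ∧
    w (d - e2 - Km) (e2 - e3) = d - e3 - Km ∧
    w (d - e2 - Km) (e3 - e4) = e3 - e4 ∧
    w (d - e2 - Km) (e3 + e4) = e3 + e4 ∧
    w (d - e2 - Km) (Kp - e1 - e2) = Kp - e1 - e2 := by
  refine ⟨?_, ?_, ?_, ?_, ?_, ?_, ?_⟩
  · simp [B, Kp, Km, e1, e2, e3, e4, d]
  · rw [w, if_neg hne1, if_pos hB1]
    abel
  · rw [w, if_pos rfl]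
    abel
  · rw [w, if_neg hne3, if_pos hB3]
    abel
  · rw [w, if_neg hne4, if_neg hB4]
  · rw [w, if_neg hne5, if_neg hB5]
  · rw [w, if_neg hne6, if_neg hB6]


end HKMRank6
end

section
/- Let γ₁ = ε₁ − ε₂, γ₂ = K⁻ − δ + ε₂, γ₃ = δ − ε₃ − K⁻, γ₄ = ε₃ − ε₄, γ₅ = ε₃ + ε₄, γ₆ = K⁺ − ε₁ − ε₂. Then B(γ₃,γ₃) = 0, and the generalized Weyl reflection w_{γ₃} maps this simple root system onto the system (ε₁ − ε₂, ε₂ − ε₃, K⁻ − δ + ε₃, δ − ε₄ − K⁻, δ + ε₄ − K⁻, K⁺ − K⁻ + δ − ε₁ − ε₂ − ε₃); explicitly, w_{γ₃} fixes γ₁, maps γ₂ to ε₂ − ε₃, γ₃ to K⁻ − δ + ε₃, γ₄ to δ − ε₄ − K⁻, γ₅ to δ + ε₄ − K⁻, and γ₆ to K⁺ − K⁻ + δ − ε₁ − ε₂ − ε₃. -/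
open scoped Classical

namespace HKMRank6

theorem w_self (α : Fin 7 → ℝ) : w α α = -α := if_pos rfl

theorem w_of_B_eq_zero {α β : Fin 7 → ℝ} (hne : β ≠ α) (h : B α β = 0) : w α β = β := by
  simp [w, hne, h]

theorem w_eq_add_of_B_ne_zero {α β : Fin 7 → ℝ} (hα : B α α = 0) (h : B α β ≠ 0) :
    w α β = β + α := by
  have hne : β ≠ α := by
    rintro rfl
    exact h hα
  simp [w, hne, h]

theorem odd_reflection_third_system :
    B (d - e3 - Km) (d - e3 - Km) = 0 ∧
    w (d - e3 - Km) (e1 - e2) = e1 - e2 ∧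
    w (d - e3 - Km) (Km - d + e2) = e2 - e3 ∧
    w (d - e3 - Km) (d - e3 - Km) = Km - d + e3 ∧
    w (d - e3 - Km) (e3 - e4) = d - e4 - Km ∧
    w (d - e3 - Km) (e3 + e4) = d + e4 - Km ∧
    w (d - e3 - Km) (Kp - e1 - e2) = Kp - Km + d - e1 - e2 - e3 := by
  have hiso : B (d - e3 - Km) (d - e3 - Km) = 0 := by simp [B, d, e3, Km]
  have hne : e1 - e2 ≠ d - e3 - Km := fun h ↦ by simpa [e1, e2, d, e3, Km] using congrFun h 2
  refine ⟨hiso, w_of_B_eq_zero hne (by simp [B, e1, e2, d, e3, Km]), ?_,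
    (w_self _).trans (by abel), ?_, ?_, ?_⟩
  all_goals
    rw [w_eq_add_of_B_ne_zero hiso (by simp [B, Kp, Km, e1, e2, e3, e4, d])]
    abel

end HKMRank6
end
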